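/- Fix an integer N ≥ 2, γ > 0 and ω > 0. Suppose ε ↦ (p*(ε), q*(ε), β*(ε)) is a real-analytic map on an interval (−ε₀, ε₀) with values in ℝ^N × ℝ^N × ℝ such that for every ε: G(p*(ε), q*(ε); ε, ω, γ, β*(ε)) = 0, q*₁(ε) = 0, and for ε ≠ 0 one has p*_N(ε) ≠ 0 and p*_{N−1}(ε) ≠ 0; and at ε = 0: p*(0) = (√ω, 0, …, 0), q*(0) = 0, β*(0) = 0. Then the phase difference between the last two oscillators, ψ_{N−1}(ε) := arctan(q*_N(ε)/p*_N(ε)) − arctan(q*_{N−1}(ε)/p*_{N−1}(ε)), satisfies lim_{ε→0, ε≠0} ψ_{N−1}(ε) = arctan(γ/ω); in particular, to leading order ψ_{N−1} = γ/ω, independently of the number of sites N. -/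

import Mathlib

/-!
Sites are numbered `1, …, N` as in the paper (the code indexes them `0, …, N − 1`).
At `ε = 0` every site but the first is at rest, so as `ε → 0` the coefficient
`kε − ω + p_j² + q_j²` of each later site tends to `−ω`. Since `q₁ ≡ 0`, the interior equations
`(−ω + o(1)) q_j = ε (q_{j+1} + q_{j−1})` give inductively `q_j = O(ε q_{j+1})`, in particular
`q_{N−1} = O(ε q_N)`. The two equations at the damped last site then read
`γ p_N = (ω + o(1)) q_N` and `ε p_{N−1} = −((ω² + γ²)/γ + o(1)) q_N`, so `q_N / p_N → γ / ω`
while `q_{N−1} / p_{N−1} = O(ε²) → 0`.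
-/

/-- The discrete Laplacian on `Fin N → ℝ` with the boundary conventions
`(Δx)_1 = x_2 − x_1`, `(Δx)_N = x_{N−1} − x_N`. -/
def lap {N : ℕ} (x : Fin N → ℝ) (j : Fin N) : ℝ :=
  (if h : j.val + 1 < N then x ⟨j.val + 1, h⟩ else x j)
  + (if 0 < j.val then x ⟨j.val - 1, lt_of_le_of_lt (Nat.sub_le _ _) j.isLt⟩ else x j)
  - 2 * x j

/-- The damped and driven dNLS vector field in the rotating frame, in real
coordinates `(p, q)`, with parameters `ε, ω, γ, β`. -/
def G (N : ℕ) (ε ω γ β : ℝ) (u : (Fin N → ℝ) × (Fin N → ℝ)) :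
    (Fin N → ℝ) × (Fin N → ℝ) :=
  (fun j => ε * lap u.2 j + ω * u.2 j - (u.1 j ^ 2 + u.2 j ^ 2) * u.2 j
      + (if j.val = 0 then β * u.1 j else 0)
      - (if j.val = N - 1 then γ * u.1 j else 0),
   fun j => -(ε * lap u.1 j) - ω * u.1 j + (u.1 j ^ 2 + u.2 j ^ 2) * u.1 j
      + (if j.val = 0 then β * u.2 j else 0)
      - (if j.val = N - 1 then γ * u.2 j else 0))

open Filter Topology Asymptotics

section Asymptotics

variable {α : Type*} {l : Filter α}

lemma isBigO_mul_self_of_tendsto {c f : α → ℝ} {L : ℝ} (hc : Tendsto c l (𝓝 L)) (hL : L ≠ 0) :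
    f =O[l] fun x => c x * f x := by
  refine (((hc.inv₀ hL).isBigO_one ℝ).mul (isBigO_refl (fun x => c x * f x) l)).congr' ?_
    (by simp)
  filter_upwards [hc.eventually_ne hL] with x hx
  field_simp

lemma isBigO_mul_of_eq_mul_add {e c f g h : α → ℝ} {L : ℝ} (he : Tendsto e l (𝓝 0))
    (hc : Tendsto c l (𝓝 L)) (hL : L ≠ 0) (hg : g =O[l] f)
    (heq : ∀ᶠ x in l, c x * f x = e x * (h x + g x)) :
    f =O[l] fun x => e x * h x := by
  have hcf : f =O[l] fun x => c x * f x := isBigO_mul_self_of_tendsto hc hL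
  have heg : (fun x => e x * g x) =o[l] fun x => c x * f x :=
    (by simpa using ((isLittleO_one_iff ℝ).2 he).mul_isBigO hg :
      (fun x => e x * g x) =o[l] f).trans_isBigO hcf
  refine hcf.trans (heg.right_isBigO_sub.congr' .rfl ?_)
  filter_upwards [heq] with x hx
  rw [hx]; ring

lemma isBigO_mul_succ_of_recurrence {e : α → ℝ} {q : ℕ → α → ℝ} {L : ℝ} {m : ℕ}
    (he : Tendsto e l (𝓝 0)) (hL : L ≠ 0) (h0 : q 0 =ᶠ[l] 0)
    (hrec : ∀ j, j + 1 ≤ m → ∃ c : α → ℝ, Tendsto c l (𝓝 L) ∧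
      ∀ᶠ x in l, c x * q (j + 1) x = e x * (q (j + 2) x + q j x)) :
    ∀ j ≤ m, q j =O[l] fun x => e x * q (j + 1) x := by
  intro j hj
  induction j with
  | zero => exact h0.trans_isBigO (isBigO_zero _ _)
  | succ j ih =>
    obtain ⟨c, hc, heq⟩ := hrec j hj
    have hbdd : (fun x => e x * q (j + 1) x) =O[l] q (j + 1) := by
      simpa using (he.isBigO_one ℝ).mul (isBigO_refl (q (j + 1)) l)
    exact isBigO_mul_of_eq_mul_add he hc hL ((ih (by omega)).trans hbdd) heq

lemma tendsto_div_of_last_site {e c p q p₂ q₂ : α → ℝ} {ω γ : ℝ} (hω : ω ≠ 0) (hγ : γ ≠ 0)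
    (he : Tendsto e l (𝓝 0)) (hc : Tendsto c l (𝓝 (-ω)))
    (he0 : ∀ᶠ x in l, e x ≠ 0) (hp0 : ∀ᶠ x in l, p x ≠ 0)
    (hq₂ : q₂ =O[l] fun x => e x * q x)
    (hq : ∀ᶠ x in l, e x * q₂ x = c x * q x + γ * p x)
    (hp : ∀ᶠ x in l, e x * p₂ x = c x * p x - γ * q x) :
    Tendsto (fun x => q x / p x) l (𝓝 (γ / ω)) ∧ Tendsto (fun x => q₂ x / p₂ x) l (𝓝 0) := by
  have hr : Tendsto (fun x => e x * q₂ x / q x) l (𝓝 0) := by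
    have hq₂o : q₂ =o[l] q := by
      simpa using hq₂.trans_isLittleO (((isLittleO_one_iff ℝ).2 he).mul_isBigO (isBigO_refl q l))
    exact (by simpa using (he.isBigO_one ℝ).mul_isLittleO hq₂o :
      (fun x => e x * q₂ x) =o[l] q).tendsto_div_nhds_zero
  have hq0 : ∀ᶠ x in l, q x ≠ 0 := by
    filter_upwards [hq₂.eq_zero_imp, hq, hp0] with x hz hqx hpx hqz
    simp [hqz, hz (by simp [hqz]), hγ, hpx] at hqx
  have hpq : Tendsto (fun x => p x / q x) l (𝓝 (ω / γ)) := by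
    refine (by simpa using (hr.sub hc).div_const γ :
      Tendsto (fun x => (e x * q₂ x / q x - c x) / γ) l (𝓝 (ω / γ))).congr' ?_
    filter_upwards [hq, hq0] with x hx hqx
    field_simp
    linear_combination hx
  constructor
  · simpa using hpq.inv₀ (div_ne_zero hω hγ)
  · have hden : -ω * (ω / γ) - γ ≠ 0 := by
      rw [show -ω * (ω / γ) - γ = -(ω ^ 2 + γ ^ 2) / γ by field_simp; ring]
      exact div_ne_zero (neg_ne_zero.2 (by positivity)) hγ
    have hlim := hr.div ((hc.mul hpq).sub_const γ) hden
    rw [zero_div] at hlim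
    refine hlim.congr' ?_
    filter_upwards [he0, hq0, hp] with x hex hqx hpx
    rw [Pi.div_apply, show c x * (p x / q x) - γ = e x * p₂ x / q x by rw [hpx]; field_simp,
      div_div_div_cancel_right₀ hqx, mul_div_mul_left _ _ hex]

end Asymptotics

section Lattice

variable {N : ℕ}

lemma lap_succ (x : Fin N → ℝ) {j : ℕ} (hj : j + 2 < N) :
    lap x ⟨j + 1, by omega⟩ = x ⟨j + 2, hj⟩ + x ⟨j, by omega⟩ - 2 * x ⟨j + 1, by omega⟩ := by
  simp only [lap, hj, dite_true, Nat.succ_pos, if_true, Nat.add_sub_cancel]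

lemma lap_last (x : Fin N → ℝ) (hN : 1 < N) :
    lap x ⟨N - 1, by omega⟩ = x ⟨N - 2, by omega⟩ - x ⟨N - 1, by omega⟩ := by
  have hlast : ¬ N - 1 + 1 < N := by omega
  have hpos : 0 < N - 1 := by omega
  have hprev : N - 1 - 1 = N - 2 := by omega
  simp only [lap, hlast, hpos, hprev, dite_false, if_true]
  ring

variable {ε ω γ β : ℝ} {u : (Fin N → ℝ) × (Fin N → ℝ)}

lemma G_eq_zero_interior_q (h : G N ε ω γ β u = 0) {j : ℕ} (hj : j + 2 < N) :
    (2 * ε - ω + (u.1 ⟨j + 1, by omega⟩ ^ 2 + u.2 ⟨j + 1, by omega⟩ ^ 2)) * u.2 ⟨j + 1, by omega⟩ =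
      ε * (u.2 ⟨j + 2, hj⟩ + u.2 ⟨j, by omega⟩) := by
  have hlast : j + 1 ≠ N - 1 := by omega
  have hsite := congrFun (congrArg Prod.fst h) ⟨j + 1, by omega⟩
  simp only [G, lap_succ _ hj, hlast, Nat.add_one_ne_zero, if_false, Prod.fst_zero,
    Pi.zero_apply] at hsite
  linear_combination -hsite

lemma G_eq_zero_last_q (h : G N ε ω γ β u = 0) (hN : 1 < N) :
    ε * u.2 ⟨N - 2, by omega⟩ =
      (ε - ω + (u.1 ⟨N - 1, by omega⟩ ^ 2 + u.2 ⟨N - 1, by omega⟩ ^ 2)) * u.2 ⟨N - 1, by omega⟩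
        + γ * u.1 ⟨N - 1, by omega⟩ := by
  have hfirst : N - 1 ≠ 0 := by omega
  have hsite := congrFun (congrArg Prod.fst h) ⟨N - 1, by omega⟩
  simp only [G, lap_last _ hN, hfirst, if_true, if_false, Prod.fst_zero, Pi.zero_apply] at hsite
  linear_combination hsite

lemma G_eq_zero_last_p (h : G N ε ω γ β u = 0) (hN : 1 < N) :
    ε * u.1 ⟨N - 2, by omega⟩ =
      (ε - ω + (u.1 ⟨N - 1, by omega⟩ ^ 2 + u.2 ⟨N - 1, by omega⟩ ^ 2)) * u.1 ⟨N - 1, by omega⟩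
        - γ * u.2 ⟨N - 1, by omega⟩ := by
  have hfirst : N - 1 ≠ 0 := by omega
  have hsite := congrFun (congrArg Prod.snd h) ⟨N - 1, by omega⟩
  simp only [G, lap_last _ hN, hfirst, if_true, if_false, Prod.snd_zero, Pi.zero_apply] at hsite
  linear_combination -hsite

end Lattice

lemma tendsto_sub_add_sq_add_sq {α : Type*} {l : Filter α} {N : ℕ} {a : α → ℝ}
    {v : α → (Fin N → ℝ) × (Fin N → ℝ)} {v₀ : (Fin N → ℝ) × (Fin N → ℝ)} {j : Fin N}
    (ω : ℝ) (ha : Tendsto a l (𝓝 0)) (hv : Tendsto v l (𝓝 v₀)) (hp : v₀.1 j = 0)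
    (hq : v₀.2 j = 0) :
    Tendsto (fun x => a x - ω + ((v x).1 j ^ 2 + (v x).2 j ^ 2)) l (𝓝 (-ω)) := by
  have hpj : Tendsto (fun x => (v x).1 j) l (𝓝 0) :=
    hp ▸ (((continuous_apply j).comp continuous_fst).tendsto _).comp hv
  have hqj : Tendsto (fun x => (v x).2 j) l (𝓝 0) :=
    hq ▸ (((continuous_apply j).comp continuous_snd).tendsto _).comp hv
  simpa using (ha.sub_const ω).add ((hpj.pow 2).add (hqj.pow 2))

lemma isBigO_q_of_G_eq_zero {l : Filter ℝ} {N : ℕ} (hN : 1 < N) {ω γ : ℝ} (hω : ω ≠ 0)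
    {u : ℝ → (Fin N → ℝ) × (Fin N → ℝ)} {β : ℝ → ℝ} {u₀ : (Fin N → ℝ) × (Fin N → ℝ)}
    (he : Tendsto (fun ε : ℝ => ε) l (𝓝 0)) (hu : Tendsto u l (𝓝 u₀))
    (hu₀ : ∀ j : Fin N, j.val ≠ 0 → u₀.1 j = 0 ∧ u₀.2 j = 0)
    (hG : ∀ᶠ ε in l, G N ε ω γ (β ε) (u ε) = 0) (hq0 : ∀ᶠ ε in l, (u ε).2 ⟨0, by omega⟩ = 0) :
    (fun ε => (u ε).2 ⟨N - 2, by omega⟩) =O[l] fun ε => ε * (u ε).2 ⟨N - 1, by omega⟩ := by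
  set q : ℕ → ℝ → ℝ := fun j ε => Function.extend Fin.val (u ε).2 0 j
  have hq : ∀ j (hj : j < N), q j = fun ε => (u ε).2 ⟨j, hj⟩ := fun j hj =>
    funext fun ε => Fin.val_injective.extend_apply (u ε).2 0 ⟨j, hj⟩
  have hrec : ∀ j, j + 1 ≤ N - 2 → ∃ c : ℝ → ℝ, Tendsto c l (𝓝 (-ω)) ∧
      ∀ᶠ ε in l, c ε * q (j + 1) ε = ε * (q (j + 2) ε + q j ε) := by
    intro j hj
    have hsite := hu₀ ⟨j + 1, by omega⟩ (Nat.add_one_ne_zero j)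
    refine ⟨_, tendsto_sub_add_sq_add_sq ω (by simpa using he.const_mul 2) hu hsite.1 hsite.2, ?_⟩
    filter_upwards [hG] with ε hε
    rw [hq j (by omega), hq (j + 1) (by omega), hq (j + 2) (by omega)]
    exact G_eq_zero_interior_q hε (by omega)
  have hchain := isBigO_mul_succ_of_recurrence he (neg_ne_zero.2 hω)
    (by rw [hq 0 (by omega)]; exact hq0) hrec (N - 2) le_rfl
  rwa [show N - 2 + 1 = N - 1 by omega, hq _ (by omega), hq _ (by omega)] at hchain

/-- The twist of the last phase difference: `ψ_{N−1} → arctan(γ/ω)` as `ε → 0`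
(Theorem 2.4). -/
theorem stmt_2 (N : ℕ) (hN : 2 ≤ N) (γ ω : ℝ) (hγ : 0 < γ) (hω : 0 < ω)
    (ε₀ : ℝ) (hε₀ : 0 < ε₀)
    (u : ℝ → (Fin N → ℝ) × (Fin N → ℝ)) (βs : ℝ → ℝ)
    (hanal : AnalyticOnNhd ℝ (fun ε => (u ε, βs ε)) (Set.Ioo (-ε₀) ε₀))
    (hG : ∀ ε ∈ Set.Ioo (-ε₀) ε₀, G N ε ω γ (βs ε) (u ε) = 0)
    (hq1 : ∀ ε ∈ Set.Ioo (-ε₀) ε₀, (u ε).2 ⟨0, by omega⟩ = 0)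
    (hne : ∀ ε ∈ Set.Ioo (-ε₀) ε₀, ε ≠ 0 →
      (u ε).1 ⟨N - 1, by omega⟩ ≠ 0 ∧ (u ε).1 ⟨N - 2, by omega⟩ ≠ 0)
    (h0p : (u 0).1 = fun j => if j.val = 0 then Real.sqrt ω else 0)
    (h0q : (u 0).2 = 0) :
    Filter.Tendsto
      (fun ε => Real.arctan ((u ε).2 ⟨N - 1, by omega⟩ / (u ε).1 ⟨N - 1, by omega⟩)
        - Real.arctan ((u ε).2 ⟨N - 2, by omega⟩ / (u ε).1 ⟨N - 2, by omega⟩))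
      (nhdsWithin 0 (Set.Ioo (-ε₀) ε₀ \ {0}))
      (nhds (Real.arctan (γ / ω))) := by
  set l := 𝓝[Set.Ioo (-ε₀) ε₀ \ {0}] (0 : ℝ)
  have hl : ∀ᶠ ε in l, ε ∈ Set.Ioo (-ε₀) ε₀ ∧ ε ≠ 0 := self_mem_nhdsWithin
  have hGl : ∀ᶠ ε in l, G N ε ω γ (βs ε) (u ε) = 0 := hl.mono fun ε hε => hG ε hε.1
  have he : Tendsto (fun ε : ℝ => ε) l (𝓝 0) := tendsto_nhdsWithin_of_tendsto_nhds tendsto_id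
  have hu : Tendsto u l (𝓝 (u 0)) :=
    ((hanal 0 ⟨by linarith, hε₀⟩).continuousAt.fst.tendsto).mono_left nhdsWithin_le_nhds
  have hu₀ : ∀ j : Fin N, j.val ≠ 0 → (u 0).1 j = 0 ∧ (u 0).2 j = 0 := fun j hj =>
    ⟨by simp [h0p, hj], by simp [h0q]⟩
  have hlast := hu₀ ⟨N - 1, by omega⟩ (Nat.sub_ne_zero_of_lt hN)
  obtain ⟨hT, hS⟩ := tendsto_div_of_last_site hω.ne' hγ.ne' he
    (tendsto_sub_add_sq_add_sq ω he hu hlast.1 hlast.2)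
    (hl.mono fun ε hε => hε.2) (hl.mono fun ε hε => (hne ε hε.1 hε.2).1)
    (isBigO_q_of_G_eq_zero hN hω.ne' he hu hu₀ hGl (hl.mono fun ε hε => hq1 ε hε.1))
    (hGl.mono fun ε h => G_eq_zero_last_q h hN) (hGl.mono fun ε h => G_eq_zero_last_p h hN)
  simpa using ((Real.continuous_arctan.tendsto _).comp hT).sub
    ((Real.continuous_arctan.tendsto _).comp hS)
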